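/- Let 𝐱 = (x₁,…,xₙ) be a tuple of distinct points in [0,1). Then there exists a unique minimal supporting partition for 𝐱 among standard dyadic partitions: a partition P of [0,1) into standard dyadic intervals such that each interval of P contains at most one xⱼ, and no strictly coarser standard dyadic partition has this property. -/

import Mathlib

/-- The standard dyadic interval `[a/2^m, (a+1)/2^m)`. -/
noncomputable def dyadicIco (m a : ℕ) : Set ℝ :=
  Set.Ico ((a : ℝ) / 2 ^ m) (((a : ℝ) + 1) / 2 ^ m)

/-- A finite set of pairs `(m, a)` is a standard dyadic partition of `[0,1)` if the
corresponding intervals are valid, pairwise disjoint, and cover `[0,1)`. -/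
noncomputable def IsSDP (P : Finset (ℕ × ℕ)) : Prop :=
  (∀ p ∈ P, p.2 < 2 ^ p.1) ∧
  (∀ p ∈ P, ∀ q ∈ P, p ≠ q → Disjoint (dyadicIco p.1 p.2) (dyadicIco q.1 q.2)) ∧
  (⋃ p ∈ P, dyadicIco p.1 p.2) = Set.Ico (0 : ℝ) 1

/-- `Q` refines `P`: every interval of `Q` is contained in an interval of `P`. -/
noncomputable def Refines (Q P : Finset (ℕ × ℕ)) : Prop :=
  ∀ q ∈ Q, ∃ p ∈ P, dyadicIco q.1 q.2 ⊆ dyadicIco p.1 p.2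

/-- `P` supports the tuple `xs`: each interval of `P` contains at most one point of `xs`. -/
noncomputable def Supports {n : ℕ} (P : Finset (ℕ × ℕ)) (xs : Fin n → ℝ) : Prop :=
  ∀ p ∈ P, ∀ i j : Fin n,
    xs i ∈ dyadicIco p.1 p.2 → xs j ∈ dyadicIco p.1 p.2 → i = j

/-!
Call a dyadic interval good if it contains at most one of the points. Two dyadic intervals are
disjoint or nested, the one of lower level containing the other. Hence the maximal good intervals
(good, with no good dyadic interval strictly above them) are pairwise disjoint, and every good
interval lies inside one of them. As the points are distinct, every interval of some level `M` is
good; so each point of `[0,1)` lies in a maximal good interval, of level at most `M`. The maximal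
good intervals thus form a supporting partition that every supporting partition refines, and
since two partitions refining each other are equal, it is the unique minimal one.
-/

open Set Finset

section DyadicIntervals

variable {m k a b : ℕ} {x : ℝ}

theorem mem_dyadicIco_iff : x ∈ dyadicIco m a ↔ 0 ≤ x ∧ ⌊x * 2 ^ m⌋₊ = a := by
  have h2m : (0 : ℝ) < 2 ^ m := by positivity
  rw [dyadicIco, Set.mem_Ico, div_le_iff₀ h2m, lt_div_iff₀ h2m]
  constructor
  · rintro ⟨hlo, hhi⟩
    have hx : 0 ≤ x * 2 ^ m := (Nat.cast_nonneg a).trans hlo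
    exact ⟨nonneg_of_mul_nonneg_left hx h2m, (Nat.floor_eq_iff hx).2 ⟨hlo, hhi⟩⟩
  · rintro ⟨hx, rfl⟩
    exact (Nat.floor_eq_iff (by positivity)).1 rfl

theorem mem_dyadicIco_floor (hx : 0 ≤ x) : x ∈ dyadicIco m ⌊x * 2 ^ m⌋₊ :=
  mem_dyadicIco_iff.2 ⟨hx, rfl⟩

theorem floor_mul_two_pow_lt (hx : x ∈ Ico (0 : ℝ) 1) : ⌊x * 2 ^ m⌋₊ < 2 ^ m := by
  rw [Nat.floor_lt (mul_nonneg hx.1 (by positivity)), Nat.cast_pow, Nat.cast_ofNat]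
  exact mul_lt_of_lt_one_left (by positivity) hx.2

theorem left_mem_dyadicIco : (a : ℝ) / 2 ^ m ∈ dyadicIco m a :=
  mem_dyadicIco_iff.2 ⟨by positivity, by simp⟩

theorem dyadicIco_subset_Ico_zero_one (ha : a < 2 ^ m) : dyadicIco m a ⊆ Ico 0 1 := by
  intro x hx
  have hlt : (a : ℝ) + 1 ≤ 2 ^ m := by exact_mod_cast ha
  rw [dyadicIco, Set.mem_Ico] at hx
  refine ⟨(div_nonneg (Nat.cast_nonneg a) (by positivity)).trans hx.1, hx.2.trans_le ?_⟩
  rwa [div_le_one (by positivity)]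

theorem floor_mul_two_pow_div (hkm : k ≤ m) :
    ⌊x * 2 ^ m⌋₊ / 2 ^ (m - k) = ⌊x * 2 ^ k⌋₊ := by
  have hpow : (2 : ℝ) ^ m / 2 ^ (m - k) = 2 ^ k := by
    rw [div_eq_iff (by positivity), ← pow_add, Nat.add_sub_cancel' hkm]
  rw [← Nat.floor_div_natCast, Nat.cast_pow, Nat.cast_ofNat, mul_div_assoc, hpow]

theorem dyadicIco_subset_dyadicIco_div (hkm : k ≤ m) :
    dyadicIco m a ⊆ dyadicIco k (a / 2 ^ (m - k)) := by
  intro x hxa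
  obtain ⟨hx, rfl⟩ := mem_dyadicIco_iff.1 hxa
  exact mem_dyadicIco_iff.2 ⟨hx, (floor_mul_two_pow_div hkm).symm⟩

theorem div_two_pow_eq_of_not_disjoint (hkm : k ≤ m)
    (h : ¬Disjoint (dyadicIco m a) (dyadicIco k b)) : a / 2 ^ (m - k) = b := by
  obtain ⟨x, hxa, hxb⟩ := Set.not_disjoint_iff.1 h
  obtain ⟨-, rfl⟩ := mem_dyadicIco_iff.1 hxa
  exact (floor_mul_two_pow_div hkm).trans (mem_dyadicIco_iff.1 hxb).2

theorem dyadicIco_subset_of_not_disjoint (hkm : k ≤ m)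
    (h : ¬Disjoint (dyadicIco m a) (dyadicIco k b)) : dyadicIco m a ⊆ dyadicIco k b :=
  div_two_pow_eq_of_not_disjoint hkm h ▸ dyadicIco_subset_dyadicIco_div hkm

theorem dyadicIco_inj (h : dyadicIco m a = dyadicIco k b) : m = k ∧ a = b := by
  have hne : (a : ℝ) / 2 ^ m < (a + 1) / 2 ^ m := by gcongr; linarith
  obtain ⟨hlo, hhi⟩ := (Set.Ico_eq_Ico_iff (Or.inl hne)).1 h
  have hpow : (2 : ℝ) ^ m = 2 ^ k := by
    have : (1 : ℝ) / 2 ^ m = 1 / 2 ^ k := by rw [add_div, add_div] at hhi; linarith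
    simpa using this
  obtain rfl : m = k := pow_right_injective₀ two_pos (by norm_num) hpow
  refine ⟨rfl, ?_⟩
  exact_mod_cast (div_left_inj' (by positivity)).1 hlo

theorem abs_sub_mul_two_pow_lt_one {y : ℝ} (hx : x ∈ dyadicIco m a) (hy : y ∈ dyadicIco m a) :
    |x - y| * 2 ^ m < 1 := by
  have h2m : (0 : ℝ) < 2 ^ m := by positivity
  rw [dyadicIco, Set.mem_Ico, div_le_iff₀ h2m, lt_div_iff₀ h2m] at hx hy
  rw [← abs_of_pos h2m, ← abs_mul, sub_mul, abs_sub_lt_iff]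
  constructor <;> linarith [hx.1, hx.2, hy.1, hy.2]

end DyadicIntervals

section MaximalDyadic

variable {G : ℕ × ℕ → Prop} {M : ℕ} {p q : ℕ × ℕ}

variable (G) in
/-- `(k, a / 2 ^ (m - k))` is the dyadic interval of level `k` containing `dyadicIco m a`. -/
def IsMaximalDyadic (p : ℕ × ℕ) : Prop :=
  p.2 < 2 ^ p.1 ∧ G p ∧ ∀ k < p.1, ¬G (k, p.2 / 2 ^ (p.1 - k))

variable (G) in
/-- When every dyadic interval of level `M` satisfies `G`, the maximal ones have level at most
`M`, so this is the finite set of all of them. -/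
noncomputable def maximalDyadics (M : ℕ) : Finset (ℕ × ℕ) :=
  open Classical in (range (M + 1) ×ˢ range (2 ^ M)).filter (IsMaximalDyadic G)

theorem IsMaximalDyadic.level_le_of_not_disjoint (hp : IsMaximalDyadic G p) (hq : G q)
    (h : ¬Disjoint (dyadicIco p.1 p.2) (dyadicIco q.1 q.2)) : p.1 ≤ q.1 := by
  by_contra! hlt
  exact hp.2.2 q.1 hlt (div_two_pow_eq_of_not_disjoint hlt.le h ▸ hq)

theorem IsMaximalDyadic.subset_of_not_disjoint (hp : IsMaximalDyadic G p) (hq : G q)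
    (h : ¬Disjoint (dyadicIco p.1 p.2) (dyadicIco q.1 q.2)) :
    dyadicIco q.1 q.2 ⊆ dyadicIco p.1 p.2 :=
  dyadicIco_subset_of_not_disjoint (hp.level_le_of_not_disjoint hq h) (fun hd => h hd.symm)

theorem IsMaximalDyadic.eq_of_not_disjoint (hp : IsMaximalDyadic G p)
    (hq : IsMaximalDyadic G q) (h : ¬Disjoint (dyadicIco p.1 p.2) (dyadicIco q.1 q.2)) :
    p = q := by
  have h' : ¬Disjoint (dyadicIco q.1 q.2) (dyadicIco p.1 p.2) := fun hd => h hd.symm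
  have hge := hq.level_le_of_not_disjoint hp.2.1 h'
  have hlevel : p.1 = q.1 := (hp.level_le_of_not_disjoint hq.2.1 h).antisymm hge
  have hindex := div_two_pow_eq_of_not_disjoint hge h
  rw [hlevel, Nat.sub_self, pow_zero, Nat.div_one] at hindex
  exact Prod.ext hlevel hindex

theorem IsMaximalDyadic.level_le (hM : ∀ a < 2 ^ M, G (M, a)) (hp : IsMaximalDyadic G p) :
    p.1 ≤ M := by
  by_contra! hlt
  refine hp.2.2 M hlt (hM _ ((Nat.div_lt_iff_lt_mul (by positivity)).2 ?_))
  rw [← pow_add, Nat.add_sub_cancel' hlt.le]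
  exact hp.1

theorem exists_isMaximalDyadic_mem (hM : ∀ a < 2 ^ M, G (M, a)) {x : ℝ}
    (hx : x ∈ Ico (0 : ℝ) 1) : ∃ p, IsMaximalDyadic G p ∧ x ∈ dyadicIco p.1 p.2 := by
  classical
  have hex : ∃ m, G (m, ⌊x * 2 ^ m⌋₊) := ⟨M, hM _ (floor_mul_two_pow_lt hx)⟩
  refine ⟨(Nat.find hex, ⌊x * 2 ^ Nat.find hex⌋₊),
    ⟨floor_mul_two_pow_lt hx, Nat.find_spec hex, fun k hk => ?_⟩, mem_dyadicIco_floor hx.1⟩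
  rw [floor_mul_two_pow_div hk.le]
  exact Nat.find_min hex hk

theorem mem_maximalDyadics (hM : ∀ a < 2 ^ M, G (M, a)) :
    p ∈ maximalDyadics G M ↔ IsMaximalDyadic G p := by
  simp only [maximalDyadics, Finset.mem_filter, Finset.mem_product, Finset.mem_range,
    and_iff_right_iff_imp]
  intro hp
  have hlevel := hp.level_le hM
  exact ⟨by omega, hp.1.trans_le (Nat.pow_le_pow_right two_pos hlevel)⟩

theorem isSDP_maximalDyadics (hM : ∀ a < 2 ^ M, G (M, a)) : IsSDP (maximalDyadics G M) := by
  simp only [IsSDP, mem_maximalDyadics hM]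
  refine ⟨fun p hp => hp.1, fun p hp q hq hpq => not_not.1 (mt (hp.eq_of_not_disjoint hq) hpq),
    (iUnion₂_subset fun p hp => dyadicIco_subset_Ico_zero_one hp.1).antisymm fun x hx => ?_⟩
  obtain ⟨p, hp, hxp⟩ := exists_isMaximalDyadic_mem hM hx
  exact mem_iUnion₂.2 ⟨p, hp, hxp⟩

theorem refines_maximalDyadics (hM : ∀ a < 2 ^ M, G (M, a)) {Q : Finset (ℕ × ℕ)}
    (hQ : IsSDP Q) (hG : ∀ q ∈ Q, G q) : Refines Q (maximalDyadics G M) := by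
  intro q hq
  obtain ⟨p, hp, hxp⟩ := exists_isMaximalDyadic_mem hM
    (dyadicIco_subset_Ico_zero_one (hQ.1 q hq) left_mem_dyadicIco)
  exact ⟨p, (mem_maximalDyadics hM).2 hp,
    hp.subset_of_not_disjoint (hG q hq) (Set.not_disjoint_iff.2 ⟨_, hxp, left_mem_dyadicIco⟩)⟩

end MaximalDyadic

theorem IsSDP.subset_of_refines {P Q : Finset (ℕ × ℕ)} (hP : IsSDP P) (hPQ : Refines P Q)
    (hQP : Refines Q P) : P ⊆ Q := by
  intro p hp
  obtain ⟨q, hq, hpq⟩ := hPQ p hp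
  obtain ⟨p', hp', hqp'⟩ := hQP q hq
  obtain rfl : p = p' := by
    by_contra hne
    exact Set.disjoint_left.1 (hP.2.1 p hp p' hp' hne) left_mem_dyadicIco
      (hqp' (hpq left_mem_dyadicIco))
  obtain ⟨hlevel, hindex⟩ := dyadicIco_inj (hpq.antisymm hqp')
  exact Prod.ext hlevel hindex ▸ hq

theorem IsSDP.eq_of_refines {P Q : Finset (ℕ × ℕ)} (hP : IsSDP P) (hQ : IsSDP Q)
    (hPQ : Refines P Q) (hQP : Refines Q P) : P = Q :=
  (hP.subset_of_refines hPQ hQP).antisymm (hQ.subset_of_refines hQP hPQ)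

theorem supports_iff_forall_subsingleton {n : ℕ} {P : Finset (ℕ × ℕ)} {xs : Fin n → ℝ} :
    Supports P xs ↔ ∀ p ∈ P, (xs ⁻¹' dyadicIco p.1 p.2).Subsingleton :=
  ⟨fun h p hp _ hi _ hj => h p hp _ _ hi hj, fun h p hp _ _ hi hj => h p hp hi hj⟩

theorem exists_level_subsingleton_preimage {n : ℕ} {xs : Fin n → ℝ}
    (hinj : Function.Injective xs) : ∃ M, ∀ a, (xs ⁻¹' dyadicIco M a).Subsingleton := by
  have hsep : ∀ᶠ m in Filter.atTop, ∀ i j : Fin n, i ≠ j → 1 ≤ |xs i - xs j| * 2 ^ m := by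
    simp only [Filter.eventually_all]
    intro i j hij
    have hpos : 0 < |xs i - xs j| := abs_pos.2 (sub_ne_zero.2 (hinj.ne hij))
    exact ((tendsto_pow_atTop_atTop_of_one_lt one_lt_two).const_mul_atTop hpos
      |>.eventually_ge_atTop 1)
  obtain ⟨M, hM⟩ := hsep.exists
  exact ⟨M, fun a i hi j hj => by_contra fun hij =>
    (hM i j hij).not_gt (abs_sub_mul_two_pow_lt_one hi hj)⟩

theorem exists_unique_minimal_supporting_partition_general
    {n : ℕ} (xs : Fin n → ℝ) (hinj : Function.Injective xs) :
    ∃! P : Finset (ℕ × ℕ), IsSDP P ∧ Supports P xs ∧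
      ∀ Q : Finset (ℕ × ℕ), IsSDP Q → Supports Q xs → Refines P Q → Q = P := by
  obtain ⟨M, hM⟩ := exists_level_subsingleton_preimage hinj
  set G : ℕ × ℕ → Prop := fun p => (xs ⁻¹' dyadicIco p.1 p.2).Subsingleton
  have hGM : ∀ a < 2 ^ M, G (M, a) := fun a _ => hM a
  set P := maximalDyadics G M
  have hP : IsSDP P := isSDP_maximalDyadics hGM
  have hPsupp : Supports P xs := supports_iff_forall_subsingleton.2 fun p hp =>
    ((mem_maximalDyadics hGM).1 hp).2.1
  have hcoarsest : ∀ Q, IsSDP Q → Supports Q xs → Refines Q P := fun Q hQ hQsupp =>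
    refines_maximalDyadics hGM hQ (supports_iff_forall_subsingleton.1 hQsupp)
  have hminimal : ∀ Q, IsSDP Q → Supports Q xs → Refines P Q → Q = P := fun Q hQ hQsupp hPQ =>
    hQ.eq_of_refines hP (hcoarsest Q hQ hQsupp) hPQ
  exact ⟨P, ⟨hP, hPsupp, hminimal⟩, fun P' ⟨hP', hP'supp, hP'min⟩ =>
    (hP'min P hP hPsupp (hcoarsest P' hP' hP'supp)).symm⟩

/-- Every tuple of distinct points of `[0,1)` has a unique minimal supporting
standard dyadic partition. -/
theorem exists_unique_minimal_supporting_partition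
    {n : ℕ} (xs : Fin n → ℝ) (hinj : Function.Injective xs)
    (hmem : ∀ i, xs i ∈ Set.Ico (0 : ℝ) 1) :
    ∃! P : Finset (ℕ × ℕ), IsSDP P ∧ Supports P xs ∧
      ∀ Q : Finset (ℕ × ℕ), IsSDP Q → Supports Q xs → Refines P Q → Q = P :=
  exists_unique_minimal_supporting_partition_general xs hinj
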